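/- Let m ≥ 3 and d_1,…,d_n with 1 ≤ dᵢ ≤ m−1 and m | Σ dᵢ. Then there exists a rational weighting w of the complete graph on [n] satisfying: (P1) the flow through each vertex i equals dᵢ(m−dᵢ); (P2) the flow across each proper partition I ⊔ J is at least ⟨d(I)⟩_m⟨d(J)⟩_m; and (P3) the flow across each proper m-partition (one with m | d(I) and m | d(J)) is at least m. -/

import Mathlib

/-!
Induction on the number of vertices, for the stronger invariant `IsGoodWeighting`.

If two degrees satisfy `d i + d j < m`, merge `i` into `j`, take a good weighting of the smaller
instance, and split `j` again: every edge at `j` is shared between `i` and `j` in the ratio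
`d i : d j`, and the edge `ij` gets weight `d i d j`. A part `I` then corresponds to a fractional
part of the smaller vertex set, with value `d i / (d i + d j)` at `j` when `I` separates `i` from
`j`. The fractional cut is affine in each coordinate, so the cut of `I` is `d i d j` plus the
`d i : d j` average of two cuts of the smaller instance, at parts of degree `d(I) + d j` and
`d(I) - d i`. As `cutBound m a` is the maximum of `y (m - y)` over `y ≡ a [ZMOD m]`, the identity
`p (a + q) (m - a - q) + q (a - p) (m - a + p) + (p + q) p q = (p + q) a (m - a)` then yields (P2),
and a similar estimate yields (P3).

If `d i + d j > m`, do the same for the degrees `m - d`, which satisfy the same conditions.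
Otherwise all pairs of degrees sum to `m`: either there are two vertices, or every degree is
`m / 2` (so `m ≥ 4`), and `w x y = d x d y / (n - 1)` works.
-/

open Finset Function

/-- `⟨a⟩_m ⟨-a⟩_m`, the bound of (P2) for a part of degree `a` when the total degree is divisible
by `m`. -/
def cutBound (m a : ℤ) : ℤ := a % m * (-a % m)

lemma cutBound_neg (m a : ℤ) : cutBound m (-a) = cutBound m a := by
  rw [cutBound, cutBound, neg_neg, mul_comm]

lemma cutBound_congr {m a b : ℤ} (h : a ≡ b [ZMOD m]) : cutBound m a = cutBound m b := by
  rw [cutBound, cutBound, h.eq, h.neg.eq]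

lemma cutBound_of_dvd {m a : ℤ} (h : m ∣ a) : cutBound m a = 0 := by
  rw [cutBound, Int.emod_eq_zero_of_dvd h, zero_mul]

lemma cutBound_eq {m : ℤ} (hm : 0 < m) (a : ℤ) : cutBound m a = a % m * (m - a % m) := by
  rw [cutBound, Int.neg_emod]
  split_ifs with h
  · rw [Int.emod_eq_zero_of_dvd h, zero_mul, zero_mul]
  · rw [Int.natAbs_of_nonneg hm.le]

lemma cutBound_of_lt {m a : ℤ} (h0 : 0 ≤ a) (h1 : a < m) : cutBound m a = a * (m - a) := by
  rw [cutBound_eq (h0.trans_lt h1), Int.emod_eq_of_lt h0 h1]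

lemma cutBound_le_sq {m : ℤ} (hm : 0 < m) (a : ℤ) : 4 * cutBound m a ≤ m ^ 2 := by
  rw [cutBound_eq hm]
  nlinarith [sq_nonneg (m - 2 * (a % m))]

lemma emod_mul_emod_eq_cutBound {m a b : ℤ} (h : m ∣ a + b) :
    a % m * (b % m) = cutBound m a := by
  rw [cutBound, (Int.modEq_iff_dvd.2 (by simpa [add_comm] using h) : -a ≡ b [ZMOD m]).eq]

lemma mul_sub_le_cutBound {m y a : ℤ} (hm : 0 < m) (h : y ≡ a [ZMOD m]) :
    y * (m - y) ≤ cutBound m a := by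
  rw [cutBound_eq hm, ← h.eq]
  have hr0 := Int.emod_nonneg y hm.ne'
  have hr1 := Int.emod_lt_of_pos y hm
  have hy : y = y % m + m * (y / m) := (Int.emod_add_mul_ediv y m).symm
  generalize y % m = r at hr0 hr1 hy ⊢
  generalize y / m = k at hy
  subst hy
  rcases lt_trichotomy k 0 with hk | rfl | hk
  · nlinarith [mul_nonneg_of_nonpos_of_nonpos (mul_nonpos_of_nonpos_of_nonneg hk.le hm.le)
      (by nlinarith : 2 * r + (k - 1) * m ≤ 0)]
  · simp
  · nlinarith [mul_nonneg (mul_nonneg hk.le hm.le) (by nlinarith : 0 ≤ 2 * r + (k - 1) * m)]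

lemma cutBound_split {m A p q : ℤ} (hm : 0 < m) (hp : 0 ≤ p) (hq : 0 ≤ q) :
    (p + q) * cutBound m A ≤
      p * cutBound m (A + q) + q * cutBound m (A - p) + (p + q) * (p * q) := by
  have h1 := mul_sub_le_cutBound hm ((Int.mod_modEq A m).add_right q)
  have h2 := mul_sub_le_cutBound hm ((Int.mod_modEq A m).sub_right p)
  rw [cutBound_eq hm A]
  nlinarith [mul_le_mul_of_nonneg_left h1 hp, mul_le_mul_of_nonneg_left h2 hq]

lemma le_cutBound_split {m A p q : ℤ} (hm : 0 < m) (hA : m ∣ A) (hp : 1 ≤ p) (hq : 1 ≤ q) :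
    (p + q) * m ≤ p * cutBound m (A + q) + q * cutBound m (A - p) + (p + q) * (p * q) := by
  have h1 : q * (m - q) ≤ cutBound m (A + q) :=
    mul_sub_le_cutBound hm (Int.modEq_iff_dvd.2 (by simpa using hA))
  have h2 : (m - p) * (m - (m - p)) ≤ cutBound m (A - p) :=
    mul_sub_le_cutBound hm (Int.modEq_iff_dvd.2 (by simpa using dvd_sub hA (dvd_refl m)))
  nlinarith [mul_le_mul_of_nonneg_left h1 (by omega : (0 : ℤ) ≤ p),
    mul_le_mul_of_nonneg_left h2 (by omega : (0 : ℤ) ≤ q),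
    mul_nonneg (sub_nonneg.2 hp) (sub_nonneg.2 hq)]

lemma le_mul_add_div_mul_add_div_mul {p q X Y Z C D : ℚ} (hp : 0 < p) (hq : 0 < q)
    (h : (p + q) * X ≤ p * Y + q * Z + (p + q) * (p * q)) (hY : Y ≤ C) (hZ : Z ≤ D) :
    X ≤ p * q + p / (p + q) * C + q / (p + q) * D := by
  have hpq : 0 < p + q := add_pos hp hq
  have e : p * q + p / (p + q) * C + q / (p + q) * D =
      (p * C + q * D + (p + q) * (p * q)) / (p + q) := by
    field_simp
    ring
  rw [e, le_div_iff₀ hpq]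
  nlinarith [mul_le_mul_of_nonneg_left hY hp.le, mul_le_mul_of_nonneg_left hZ hq.le]

variable {V : Type*}

def fracCut (s : Finset V) (w : V → V → ℚ) (μ : V → ℚ) : ℚ :=
  ∑ x ∈ s, ∑ y ∈ s, μ x * (1 - μ y) * w x y

lemma fracCut_add (s : Finset V) (w w' : V → V → ℚ) (μ : V → ℚ) :
    fracCut s (fun x y => w x y + w' x y) μ = fracCut s w μ + fracCut s w' μ := by
  simp only [fracCut, mul_add, sum_add_distrib]

variable [DecidableEq V]

def cut (s : Finset V) (w : V → V → ℚ) (I : Finset V) : ℚ := ∑ x ∈ I, ∑ y ∈ s \ I, w x y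

lemma sum_insert_mul_update_id {R : Type*} [CommSemiring R] {t : Finset V} {i j : V} (hi : i ∉ t)
    (hj : j ∈ t) (c f : V → R) :
    ∑ y ∈ insert i t, c y * f (update id i j y) = ∑ v ∈ t, update c j (c i + c j) v * f v := by
  have h1 : ∑ y ∈ t, c y * f (update id i j y) = ∑ y ∈ t, c y * f y :=
    sum_congr rfl fun y hy => by rw [update_of_ne (ne_of_mem_of_not_mem hy hi), id]
  have h2 : ∑ v ∈ t.erase j, update c j (c i + c j) v * f v = ∑ v ∈ t.erase j, c v * f v :=
    sum_congr rfl fun v hv => by rw [update_of_ne (ne_of_mem_erase hv)]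
  rw [sum_insert hi, update_self, h1, ← add_sum_erase t _ hj,
    ← add_sum_erase t (fun v => update c j (c i + c j) v * f v) hj, h2, update_self]
  ring

section sums
variable {M : Type*} [AddCommMonoid M] {I : Finset V} {i j : V} (d : V → M)

lemma sum_erase_update_add (hiI : i ∈ I) (hjI : j ∈ I) (hij : i ≠ j) :
    ∑ x ∈ I.erase i, update d j (d i + d j) x = ∑ x ∈ I, d x := by
  rw [sum_update_of_mem (mem_erase.2 ⟨hij.symm, hjI⟩), sdiff_singleton_eq_erase,
    ← add_sum_erase I d hiI, ← add_sum_erase (I.erase i) d (mem_erase.2 ⟨hij.symm, hjI⟩)]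
  abel

lemma sum_insert_erase_update_add (hiI : i ∈ I) (hjI : j ∉ I) :
    ∑ x ∈ insert j (I.erase i), update d j (d i + d j) x = ∑ x ∈ I, d x + d j := by
  rw [sum_insert fun h => hjI (mem_of_mem_erase h), update_self,
    sum_update_of_notMem fun h => hjI (mem_of_mem_erase h), ← add_sum_erase I d hiI]
  abel

lemma sum_update_add_of_mem (hjI : j ∈ I) :
    ∑ x ∈ I, update d j (d i + d j) x = ∑ x ∈ I, d x + d i := by
  rw [sum_update_of_mem hjI, sdiff_singleton_eq_erase, ← add_sum_erase I d hjI]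
  abel

end sums

section cut
variable {s I : Finset V} {w : V → V → ℚ}

lemma cut_empty (s : Finset V) (w : V → V → ℚ) : cut s w ∅ = 0 := sum_empty

lemma cut_self (s : Finset V) (w : V → V → ℚ) : cut s w s = 0 := by simp [cut]

lemma cut_singleton {x : V} (hx : x ∈ s) (hw : w x x = 0) : cut s w {x} = ∑ y ∈ s, w x y := by
  rw [cut, sum_singleton, ← sum_sdiff (singleton_subset_iff.2 hx), sum_singleton, hw, add_zero]

lemma fracCut_eq_cut {μ : V → ℚ} (hI : I ⊆ s) (hμ : ∀ x ∈ s, μ x = if x ∈ I then 1 else 0) :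
    fracCut s w μ = cut s w I := by
  calc fracCut s w μ = ∑ x ∈ s, if x ∈ I then ∑ y ∈ s, if y ∉ I then w x y else 0 else 0 := by
        refine sum_congr rfl fun x hx => ?_
        split_ifs with hxI
        · refine sum_congr rfl fun y hy => ?_
          rw [hμ x hx, hμ y hy]; split_ifs <;> simp_all
        · exact sum_eq_zero fun y _ => by simp [hμ x hx, hxI]
    _ = cut s w I := by
        rw [sum_ite_mem, inter_eq_right.2 hI, cut]
        simp only [← sum_filter, sdiff_eq_filter]

lemma cut_eq_fracCut (hI : I ⊆ s) :
    cut s w I = fracCut s w (fun x => if x ∈ I then 1 else 0) :=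
  (fracCut_eq_cut hI fun _ _ => rfl).symm

lemma fracCut_update {j : V} (hj : j ∈ s) (μ : V → ℚ) (a : ℚ) :
    fracCut s w (update μ j a) =
      a * (1 - a) * w j j + a * ∑ y ∈ s.erase j, (1 - μ y) * w j y +
        (1 - a) * ∑ x ∈ s.erase j, μ x * w x j + fracCut (s.erase j) w μ := by
  have row : ∀ x, ∑ y ∈ s, update μ j a x * (1 - update μ j a y) * w x y =
      update μ j a x * (1 - a) * w x j + ∑ y ∈ s.erase j, update μ j a x * (1 - μ y) * w x y := by
    intro x
    rw [← add_sum_erase s _ hj, update_self]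
    congr 1
    exact sum_congr rfl fun y hy => by rw [update_of_ne (ne_of_mem_erase hy)]
  have rest : ∑ x ∈ s.erase j, ∑ y ∈ s, update μ j a x * (1 - update μ j a y) * w x y =
      (1 - a) * ∑ x ∈ s.erase j, μ x * w x j + fracCut (s.erase j) w μ := by
    rw [fracCut, mul_sum, ← sum_add_distrib]
    refine sum_congr rfl fun x hx => ?_
    rw [row, update_of_ne (ne_of_mem_erase hx)]
    ring
  rw [fracCut, ← add_sum_erase s _ hj, rest, row, update_self]
  simp only [mul_assoc, ← mul_sum]
  ring

lemma fracCut_update_convex {j : V} (hj : j ∈ s) (hw : w j j = 0) (μ : V → ℚ) {a b : ℚ}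
    (hab : a + b = 1) :
    fracCut s w (update μ j a) =
      a * fracCut s w (update μ j 1) + b * fracCut s w (update μ j 0) := by
  obtain rfl : b = 1 - a := by linarith
  simp only [fracCut_update hj, hw]
  ring

variable {i j : V}

lemma fracCut_fold (hi : i ∈ s) (hj : j ∈ s) (hij : i ≠ j) {c : V → ℚ} (hc : c i + c j = 1)
    (hc' : ∀ x ∈ s.erase i, x ≠ j → c x = 1) (W : V → V → ℚ) (χ : V → ℚ) :
    fracCut s (fun x y => c x * c y * W (update id i j x) (update id i j y)) χ =
      fracCut (s.erase i) W (update χ j (c i * χ i + c j * χ j)) := by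
  set t := s.erase i
  have hit : i ∉ t := notMem_erase i s
  have hjt : j ∈ t := mem_erase.2 ⟨hij.symm, hj⟩
  set μ := update χ j (c i * χ i + c j * χ j)
  set ν := update (fun y => (1 - χ y) * c y) j ((1 - χ i) * c i + (1 - χ j) * c j)
  have hμ : ∀ u ∈ t, update (fun x => χ x * c x) j (χ i * c i + χ j * c j) u = μ u := by
    intro u hu
    simp only [μ]
    by_cases huj : u = j
    · rw [huj, update_self, update_self]; ring
    · rw [update_of_ne huj, update_of_ne huj, hc' u hu huj, mul_one]
  have hν : ∀ v ∈ t, ν v = 1 - μ v := by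
    intro v hv
    simp only [μ, ν]
    by_cases hvj : v = j
    · rw [hvj, update_self, update_self]; linear_combination hc
    · rw [update_of_ne hvj, update_of_ne hvj, hc' v hv hvj, mul_one]
  calc _ = ∑ x ∈ insert i t, (χ x * c x) *
          ∑ y ∈ insert i t, (1 - χ y) * c y * W (update id i j x) (update id i j y) := by
        rw [insert_erase hi, fracCut]
        refine sum_congr rfl fun x _ => ?_
        rw [mul_sum]
        exact sum_congr rfl fun y _ => by ring
    _ = ∑ x ∈ insert i t, (χ x * c x) * ∑ v ∈ t, ν v * W (update id i j x) v :=
        sum_congr rfl fun x _ => by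
          rw [sum_insert_mul_update_id hit hjt (fun y => (1 - χ y) * c y) (W (update id i j x))]
    _ = ∑ u ∈ t, update (fun x => χ x * c x) j (χ i * c i + χ j * c j) u *
          ∑ v ∈ t, ν v * W u v :=
        sum_insert_mul_update_id hit hjt (fun x => χ x * c x) fun u => ∑ v ∈ t, ν v * W u v
    _ = _ := by
        rw [fracCut]
        refine sum_congr rfl fun u hu => ?_
        rw [hμ u hu, mul_sum]
        refine sum_congr rfl fun v hv => ?_
        rw [hν v hv]
        ring

lemma fracCut_edge (hi : i ∈ s) (hj : j ∈ s) (hij : i ≠ j) (e : ℚ) (χ : V → ℚ) :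
    fracCut s (fun x y => if x = i ∧ y = j ∨ x = j ∧ y = i then e else 0) χ =
      e * (χ i * (1 - χ j) + χ j * (1 - χ i)) := by
  rw [fracCut, sum_eq_add_of_mem i j hi hj hij fun x _ hx => sum_eq_zero fun y _ => by
      simp [hx.1, hx.2],
    sum_eq_single_of_mem j hj fun y _ hy => by simp [hy, hij],
    sum_eq_single_of_mem i hi fun y _ hy => by simp [hy, hij.symm]]
  simp [hij, hij.symm]
  ring

end cut

def splitShare (i j : V) (p q : ℚ) (x : V) : ℚ :=
  if x = i then p / (p + q) else if x = j then q / (p + q) else 1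

/-- Splits the vertex `j` of `W` into `i` and `j`, of degrees `p` and `q`: each edge at `j` is
shared between the two in the ratio `p : q`, and the new edge `ij` gets weight `p q`. -/
def splitWeighting (W : V → V → ℚ) (i j : V) (p q : ℚ) : V → V → ℚ := fun x y =>
  splitShare i j p q x * splitShare i j p q y * W (update id i j x) (update id i j y) +
    if x = i ∧ y = j ∨ x = j ∧ y = i then p * q else 0

section split
variable {s : Finset V} {W : V → V → ℚ} {i j : V} {p q : ℚ}

lemma fracCut_splitWeighting (hi : i ∈ s) (hj : j ∈ s) (hij : i ≠ j) (hpq : p + q ≠ 0)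
    (χ : V → ℚ) :
    fracCut s (splitWeighting W i j p q) χ =
      fracCut (s.erase i) W (update χ j (p / (p + q) * χ i + q / (p + q) * χ j)) +
        p * q * (χ i * (1 - χ j) + χ j * (1 - χ i)) := by
  have hc : splitShare i j p q i + splitShare i j p q j = 1 := by
    simp [splitShare, hij.symm, ← add_div, div_self hpq]
  have hc' : ∀ x ∈ s.erase i, x ≠ j → splitShare i j p q x = 1 := fun x hx hxj => by
    simp [splitShare, ne_of_mem_erase hx, hxj]
  unfold splitWeighting
  rw [fracCut_add, fracCut_fold hi hj hij hc hc', fracCut_edge hi hj hij]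
  simp [splitShare, hij.symm]

lemma splitWeighting_symm (hW : ∀ x y, W x y = W y x) (x y : V) :
    splitWeighting W i j p q x y = splitWeighting W i j p q y x := by
  rw [splitWeighting, splitWeighting, hW (update id i j x), mul_comm (splitShare i j p q x)]
  congr 1
  split_ifs <;> first | rfl | tauto

lemma splitWeighting_self (hW : ∀ x, W x x = 0) (hij : i ≠ j) (x : V) :
    splitWeighting W i j p q x x = 0 := by
  rw [splitWeighting, hW, mul_zero, zero_add, if_neg]
  rintro (⟨rfl, rfl⟩ | ⟨rfl, rfl⟩) <;> exact hij rfl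

variable {I : Finset V}

lemma cut_splitWeighting_of_mem_of_mem (hi : i ∈ s) (hj : j ∈ s) (hij : i ≠ j) (hpq : p + q ≠ 0)
    (hI : I ⊆ s) (hiI : i ∈ I) (hjI : j ∈ I) :
    cut s (splitWeighting W i j p q) I = cut (s.erase i) W (I.erase i) := by
  rw [cut_eq_fracCut hI, fracCut_splitWeighting hi hj hij hpq]
  simp only [if_pos hiI, if_pos hjI, mul_one, sub_self, mul_zero, add_zero, ← add_div, div_self hpq]
  refine fracCut_eq_cut (erase_subset_erase i hI) fun u hu => ?_
  by_cases huj : u = j <;> simp [huj, hij.symm, hjI, ne_of_mem_erase hu]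

lemma cut_splitWeighting_of_mem_of_notMem (hi : i ∈ s) (hj : j ∈ s) (hij : i ≠ j)
    (hpq : p + q ≠ 0) (hW : W j j = 0) (hI : I ⊆ s) (hiI : i ∈ I) (hjI : j ∉ I) :
    cut s (splitWeighting W i j p q) I =
      p * q + p / (p + q) * cut (s.erase i) W (insert j (I.erase i)) +
        q / (p + q) * cut (s.erase i) W (I.erase i) := by
  have hjt : j ∈ s.erase i := mem_erase.2 ⟨hij.symm, hj⟩
  rw [cut_eq_fracCut hI, fracCut_splitWeighting hi hj hij hpq]
  simp only [if_pos hiI, if_neg hjI, mul_one, mul_zero, add_zero, sub_zero]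
  rw [fracCut_update_convex hjt hW _ (b := q / (p + q)) (by field_simp),
    fracCut_eq_cut (insert_subset hjt (erase_subset_erase i hI)) fun u hu => ?_,
    fracCut_eq_cut (erase_subset_erase i hI) fun u hu => ?_]
  · ring
  all_goals by_cases huj : u = j <;> simp [huj, hjI, ne_of_mem_erase hu]

lemma cut_splitWeighting_of_notMem_of_mem (hi : i ∈ s) (hj : j ∈ s) (hij : i ≠ j)
    (hpq : p + q ≠ 0) (hW : W j j = 0) (hI : I ⊆ s) (hiI : i ∉ I) (hjI : j ∈ I) :
    cut s (splitWeighting W i j p q) I =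
      p * q + q / (p + q) * cut (s.erase i) W I + p / (p + q) * cut (s.erase i) W (I.erase j) := by
  have hjt : j ∈ s.erase i := mem_erase.2 ⟨hij.symm, hj⟩
  have hIt : I ⊆ s.erase i := fun x hx => mem_erase.2 ⟨fun h => hiI (h ▸ hx), hI hx⟩
  rw [cut_eq_fracCut hI, fracCut_splitWeighting hi hj hij hpq]
  simp only [if_neg hiI, if_pos hjI, mul_one, mul_zero, zero_add, sub_zero, sub_self]
  rw [fracCut_update_convex hjt hW _ (b := p / (p + q)) (by field_simp; ring),
    fracCut_eq_cut hIt fun u hu => ?_, fracCut_eq_cut ((erase_subset j I).trans hIt) fun u hu => ?_]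
  · ring
  all_goals by_cases huj : u = j <;> simp [huj, hjI]

lemma cut_splitWeighting_of_notMem_of_notMem (hi : i ∈ s) (hj : j ∈ s) (hij : i ≠ j)
    (hpq : p + q ≠ 0) (hI : I ⊆ s) (hiI : i ∉ I) (hjI : j ∉ I) :
    cut s (splitWeighting W i j p q) I = cut (s.erase i) W I := by
  have hIt : I ⊆ s.erase i := fun x hx => mem_erase.2 ⟨fun h => hiI (h ▸ hx), hI hx⟩
  rw [cut_eq_fracCut hI, fracCut_splitWeighting hi hj hij hpq]
  simp only [if_neg hiI, if_neg hjI, mul_zero, zero_mul, add_zero]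
  refine fracCut_eq_cut hIt fun u hu => ?_
  by_cases huj : u = j <;> simp [huj, hjI]

end split

/-- (P1)–(P3) on the vertex set `s`, strengthened for the induction: (P2) for every part `I ⊆ s`
and (P3) for every nonempty proper one. -/
structure IsGoodWeighting (m : ℤ) (d : V → ℤ) (s : Finset V) (w : V → V → ℚ) : Prop where
  symm : ∀ x y, w x y = w y x
  self : ∀ x, w x x = 0
  flow : ∀ x ∈ s, ∑ y ∈ s, w x y = ((d x * (m - d x) : ℤ) : ℚ)
  cutBound_le : ∀ I ⊆ s, (cutBound m (∑ x ∈ I, d x) : ℚ) ≤ cut s w I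
  le_cut : ∀ I ⊆ s, I.Nonempty → (s \ I).Nonempty → m ∣ ∑ x ∈ I, d x → (m : ℚ) ≤ cut s w I

namespace IsGoodWeighting

variable {m : ℤ} {d : V → ℤ} {s I : Finset V} {w W : V → V → ℚ} {i j : V}

theorem of_sub (hw : IsGoodWeighting m (fun x => m - d x) s w) : IsGoodWeighting m d s w where
  symm := hw.symm
  self := hw.self
  flow x hx := by rw [hw.flow x hx]; ring_nf
  cutBound_le I hI := by
    have hmod : ∑ x ∈ I, (m - d x) ≡ -∑ x ∈ I, d x [ZMOD m] :=
      Int.modEq_iff_dvd.2 ⟨-I.card, by simp [sum_sub_distrib]; ring⟩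
    rw [← cutBound_neg, ← cutBound_congr hmod]
    exact hw.cutBound_le I hI
  le_cut I hI hI' hIc hdvd := hw.le_cut I hI hI' hIc (by
    simpa [sum_sub_distrib] using dvd_sub (dvd_mul_left m I.card) hdvd)

section split
variable (hW : IsGoodWeighting m (update d j (d i + d j)) (s.erase i) W) (hi : i ∈ s) (hj : j ∈ s)
  (hij : i ≠ j)
include hW hi hj hij

theorem split_flow (hpq : (d i : ℚ) + d j ≠ 0) (x : V) (hx : x ∈ s) :
    ∑ y ∈ s, splitWeighting W i j (d i) (d j) x y = ((d x * (m - d x) : ℤ) : ℚ) := by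
  have hjt : j ∈ s.erase i := mem_erase.2 ⟨hij.symm, hj⟩
  have hflowj : cut (s.erase i) W {j} = (((d i + d j) * (m - (d i + d j)) : ℤ) : ℚ) := by
    rw [cut_singleton hjt (hW.self j), hW.flow j hjt, update_self]
  rw [← cut_singleton hx (splitWeighting_self hW.self hij x)]
  by_cases hxi : x = i
  · rw [hxi, cut_splitWeighting_of_mem_of_notMem hi hj hij hpq (hW.self j)
      (singleton_subset_iff.2 hi) (mem_singleton_self i) (by simpa using hij.symm),
      erase_singleton, insert_empty, cut_empty, hflowj]
    field_simp
    push_cast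
    ring
  by_cases hxj : x = j
  · rw [hxj, cut_splitWeighting_of_notMem_of_mem hi hj hij hpq (hW.self j)
      (singleton_subset_iff.2 hj) (by simpa using hij) (mem_singleton_self j),
      erase_singleton, cut_empty, hflowj]
    field_simp
    push_cast
    ring
  have hxt : x ∈ s.erase i := mem_erase.2 ⟨hxi, hx⟩
  rw [cut_splitWeighting_of_notMem_of_notMem hi hj hij hpq (singleton_subset_iff.2 hx)
      (by simpa using Ne.symm hxi) (by simpa using Ne.symm hxj),
    cut_singleton hxt (hW.self x), hW.flow x hxt, update_of_ne hxj]

theorem le_cut_split_of_mem_of_notMem (hdi : 0 < d i) (hdj : 0 < d j) (hI : I ⊆ s)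
    (hiI : i ∈ I) (hjI : j ∉ I) {X : ℚ}
    (hX : ((d i : ℚ) + d j) * X ≤ d i * (cutBound m (∑ x ∈ I, d x + d j) : ℚ) +
      d j * (cutBound m (∑ x ∈ I, d x - d i) : ℚ) + (d i + d j) * (d i * d j)) :
    X ≤ cut s (splitWeighting W i j (d i) (d j)) I := by
  have hp : (0 : ℚ) < d i := by exact_mod_cast hdi
  have hq : (0 : ℚ) < d j := by exact_mod_cast hdj
  have hjt : j ∈ s.erase i := mem_erase.2 ⟨hij.symm, hj⟩
  have h1 := hW.cutBound_le _ (insert_subset hjt (erase_subset_erase i hI))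
  have h0 := hW.cutBound_le _ (erase_subset_erase i hI)
  rw [sum_insert_erase_update_add d hiI hjI] at h1
  rw [sum_update_of_notMem (fun h => hjI (mem_of_mem_erase h)), sum_erase_eq_sub hiI] at h0
  rw [cut_splitWeighting_of_mem_of_notMem hi hj hij (by positivity) (hW.self j) hI hiI hjI]
  exact le_mul_add_div_mul_add_div_mul hp hq hX h1 h0

theorem le_cut_split_of_notMem_of_mem (hdi : 0 < d i) (hdj : 0 < d j) (hI : I ⊆ s)
    (hiI : i ∉ I) (hjI : j ∈ I) {X : ℚ}
    (hX : ((d j : ℚ) + d i) * X ≤ d j * (cutBound m (∑ x ∈ I, d x + d i) : ℚ) +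
      d i * (cutBound m (∑ x ∈ I, d x - d j) : ℚ) + (d j + d i) * (d j * d i)) :
    X ≤ cut s (splitWeighting W i j (d i) (d j)) I := by
  have hp : (0 : ℚ) < d i := by exact_mod_cast hdi
  have hq : (0 : ℚ) < d j := by exact_mod_cast hdj
  have hIt : I ⊆ s.erase i := fun x hx => mem_erase.2 ⟨fun h => hiI (h ▸ hx), hI hx⟩
  have h1 := hW.cutBound_le I hIt
  have h0 := hW.cutBound_le _ ((erase_subset j I).trans hIt)
  rw [sum_update_add_of_mem d hjI] at h1
  rw [sum_update_of_notMem (notMem_erase j I), sum_erase_eq_sub hjI] at h0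
  rw [cut_splitWeighting_of_notMem_of_mem hi hj hij (by positivity) (hW.self j) hI hiI hjI]
  have h := le_mul_add_div_mul_add_div_mul hq hp hX h1 h0
  rwa [add_comm (d j : ℚ), mul_comm (d j : ℚ) (d i)] at h

theorem split (hm : 0 < m) (hdi : 0 < d i) (hdj : 0 < d j) :
    IsGoodWeighting m d s (splitWeighting W i j (d i) (d j)) where
  symm := splitWeighting_symm hW.symm
  self := splitWeighting_self hW.self hij
  flow := split_flow hW hi hj hij (by positivity)
  cutBound_le I hI := by
    have hpq : (d i : ℚ) + d j ≠ 0 := by positivity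
    by_cases hiI : i ∈ I <;> by_cases hjI : j ∈ I
    · rw [cut_splitWeighting_of_mem_of_mem hi hj hij hpq hI hiI hjI,
        ← sum_erase_update_add d hiI hjI hij]
      exact hW.cutBound_le _ (erase_subset_erase i hI)
    · exact hW.le_cut_split_of_mem_of_notMem hi hj hij hdi hdj hI hiI hjI
        (by exact_mod_cast cutBound_split hm hdi.le hdj.le)
    · exact hW.le_cut_split_of_notMem_of_mem hi hj hij hdi hdj hI hiI hjI
        (by exact_mod_cast cutBound_split hm hdj.le hdi.le)
    · have hIt : I ⊆ s.erase i := fun x hx => mem_erase.2 ⟨fun h => hiI (h ▸ hx), hI hx⟩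
      rw [cut_splitWeighting_of_notMem_of_notMem hi hj hij hpq hI hiI hjI,
        ← sum_update_of_notMem hjI d (d i + d j)]
      exact hW.cutBound_le I hIt
  le_cut I hI hne hc hdvd := by
    have hpq : (d i : ℚ) + d j ≠ 0 := by positivity
    by_cases hiI : i ∈ I <;> by_cases hjI : j ∈ I
    · rw [cut_splitWeighting_of_mem_of_mem hi hj hij hpq hI hiI hjI]
      obtain ⟨y, hy⟩ := hc
      refine hW.le_cut _ (erase_subset_erase i hI) ⟨j, mem_erase.2 ⟨hij.symm, hjI⟩⟩ ⟨y, ?_⟩ ?_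
      · simp only [mem_sdiff, mem_erase] at hy ⊢
        exact ⟨⟨fun h => hy.2 (h ▸ hiI), hy.1⟩, fun h => hy.2 h.2⟩
      · rwa [sum_erase_update_add d hiI hjI hij]
    · exact hW.le_cut_split_of_mem_of_notMem hi hj hij hdi hdj hI hiI hjI
        (by exact_mod_cast le_cutBound_split hm hdvd hdi hdj)
    · exact hW.le_cut_split_of_notMem_of_mem hi hj hij hdi hdj hI hiI hjI
        (by exact_mod_cast le_cutBound_split hm hdvd hdj hdi)
    · have hIt : I ⊆ s.erase i := fun x hx => mem_erase.2 ⟨fun h => hiI (h ▸ hx), hI hx⟩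
      rw [cut_splitWeighting_of_notMem_of_notMem hi hj hij hpq hI hiI hjI]
      refine hW.le_cut I hIt hne ⟨j, mem_sdiff.2 ⟨mem_erase.2 ⟨hij.symm, hj⟩, hjI⟩⟩ ?_
      rwa [sum_update_of_notMem hjI]

end split

end IsGoodWeighting

def productWeighting (d : V → ℤ) (s : Finset V) (x y : V) : ℚ :=
  if x = y then 0 else d x * d y / (s.card - 1)

section balanced
variable {m : ℤ} {d : V → ℤ} {s : Finset V}

omit [DecidableEq V] in
lemma card_ne_one_of_dvd_sum (hd : ∀ x ∈ s, 1 ≤ d x ∧ d x ≤ m - 1) (hdiv : m ∣ ∑ x ∈ s, d x) :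
    s.card ≠ 1 := by
  intro h
  obtain ⟨x, rfl⟩ := card_eq_one.1 h
  rw [sum_singleton] at hdiv
  have := Int.le_of_dvd (hd x (mem_singleton_self x)).1 hdiv
  linarith [(hd x (mem_singleton_self x)).2]

lemma two_mul_eq_of_balanced (hbal : ∀ x ∈ s, ∀ y ∈ s, x ≠ y → d x + d y = m)
    (hs : 3 ≤ s.card) {x : V} (hx : x ∈ s) : 2 * d x = m := by
  obtain ⟨y, hy, z, hz, hyz⟩ :=
    one_lt_card.1 (by rw [card_erase_of_mem hx]; omega : 1 < (s.erase x).card)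
  have hxy := hbal x hx y (mem_of_mem_erase hy) (ne_of_mem_erase hy).symm
  have hxz := hbal x hx z (mem_of_mem_erase hz) (ne_of_mem_erase hz).symm
  have hyz := hbal y (mem_of_mem_erase hy) z (mem_of_mem_erase hz) hyz
  linarith

lemma cut_productWeighting (I : Finset V) :
    cut s (productWeighting d s) I =
      (∑ x ∈ I, (d x : ℚ)) * (∑ y ∈ s \ I, (d y : ℚ)) / (s.card - 1) := by
  rw [cut, sum_mul_sum, sum_div]
  refine sum_congr rfl fun x hx => ?_
  rw [sum_div]
  refine sum_congr rfl fun y hy => ?_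
  rw [productWeighting, if_neg (ne_of_mem_of_not_mem hx (mem_sdiff.1 hy).2)]

lemma sum_productWeighting (hbal : ∀ x ∈ s, ∀ y ∈ s, x ≠ y → d x + d y = m) (hs : s.card ≠ 1)
    {x : V} (hx : x ∈ s) : ∑ y ∈ s, productWeighting d s x y = ((d x * (m - d x) : ℤ) : ℚ) := by
  have hn : (s.card : ℚ) - 1 ≠ 0 := by
    have := card_pos.2 ⟨x, hx⟩
    exact sub_ne_zero.2 (by exact_mod_cast hs)
  have hrest : ∑ y ∈ s \ {x}, (d y : ℚ) = (s.card - 1) * (m - d x) := by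
    rw [sum_congr rfl fun y hy => (show (d y : ℚ) = m - d x by
        have := hbal x hx y (mem_sdiff.1 hy).1 (by simpa [eq_comm] using (mem_sdiff.1 hy).2)
        rw [← this]; push_cast; ring),
      sum_const, card_sdiff_of_subset (singleton_subset_iff.2 hx), card_singleton, nsmul_eq_mul,
      Nat.cast_sub (card_pos.2 ⟨x, hx⟩), Nat.cast_one]
  rw [← cut_singleton hx (if_pos rfl), cut_productWeighting, sum_singleton, hrest]
  field_simp
  push_cast
  ring

lemma sq_div_four_le_cut_productWeighting (hbal : ∀ x ∈ s, ∀ y ∈ s, x ≠ y → d x + d y = m)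
    (hs : 3 ≤ s.card) {I : Finset V} (hI : I ⊆ s) (hne : I.Nonempty) (hc : (s \ I).Nonempty) :
    (m : ℚ) ^ 2 / 4 ≤ cut s (productWeighting d s) I := by
  have hsum : ∀ J ⊆ s, ∑ z ∈ J, (d z : ℚ) = J.card * (m / 2) := fun J hJ => by
    rw [sum_congr rfl fun z hz => (show (d z : ℚ) = m / 2 by
        have : ((2 * d z : ℤ) : ℚ) = m := by exact_mod_cast two_mul_eq_of_balanced hbal hs (hJ hz)
        push_cast at this
        linarith),
      sum_const, nsmul_eq_mul]
  have hk : (1 : ℚ) ≤ I.card := by exact_mod_cast card_pos.2 hne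
  have hl : (1 : ℚ) ≤ (s \ I).card := by exact_mod_cast card_pos.2 hc
  rw [cut_productWeighting, hsum I hI, hsum _ sdiff_subset, ← card_sdiff_add_card_eq_card hI,
    Nat.cast_add, div_le_div_iff₀ (by norm_num) (by linarith)]
  nlinarith [mul_nonneg (mul_nonneg (sub_nonneg.2 hk) (sub_nonneg.2 hl)) (sq_nonneg (m : ℚ))]

theorem exists_isGoodWeighting_of_balanced (hm : 3 ≤ m) (hd : ∀ x ∈ s, 1 ≤ d x ∧ d x ≤ m - 1)
    (hdiv : m ∣ ∑ x ∈ s, d x) (hbal : ∀ x ∈ s, ∀ y ∈ s, x ≠ y → d x + d y = m) :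
    ∃ w, IsGoodWeighting m d s w := by
  set w := productWeighting d s
  have hflow x (hx : x ∈ s) := sum_productWeighting hbal (card_ne_one_of_dvd_sum hd hdiv) hx
  have hproper : ∀ I ⊆ s, I.Nonempty → (s \ I).Nonempty →
      (cutBound m (∑ x ∈ I, d x) : ℚ) ≤ cut s w I ∧ (m ∣ ∑ x ∈ I, d x → (m : ℚ) ≤ cut s w I) := by
    intro I hI hne hc
    have hcard := card_sdiff_add_card_eq_card hI
    have := card_pos.2 hne
    have := card_pos.2 hc
    rcases (by omega : I.card = 1 ∨ 3 ≤ s.card) with h1 | h3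
    · obtain ⟨x, rfl⟩ := card_eq_one.1 h1
      have hx := hd x (hI (mem_singleton_self x))
      have hxs := hI (mem_singleton_self x)
      rw [cut_singleton hxs (if_pos rfl), hflow x hxs, sum_singleton,
        cutBound_of_lt (by omega) (by omega)]
      exact ⟨le_rfl, fun h => absurd (Int.le_of_dvd (by omega) h) (by omega)⟩
    · have hquarter := sq_div_four_le_cut_productWeighting hbal h3 hI hne hc
      obtain ⟨x, hx⟩ := hne
      have hm4 : (4 : ℚ) ≤ m := by
        have := two_mul_eq_of_balanced hbal h3 (hI hx)
        exact_mod_cast (by omega : 4 ≤ m)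
      have hF : (4 * cutBound m (∑ x ∈ I, d x) : ℚ) ≤ (m : ℚ) ^ 2 := by
        exact_mod_cast cutBound_le_sq (by omega) _
      exact ⟨by linarith, fun _ => by nlinarith⟩
  refine ⟨w, ⟨fun x y => ?_, fun x => if_pos rfl, hflow, fun I hI => ?_,
    fun I hI hne hc => (hproper I hI hne hc).2⟩⟩
  · simp only [w, productWeighting, eq_comm (a := x), mul_comm (d x : ℚ)]
  rcases I.eq_empty_or_nonempty with rfl | hne
  · simp [cut_empty, cutBound]
  rcases (s \ I).eq_empty_or_nonempty with hc | hc
  · obtain rfl : I = s := hI.antisymm (sdiff_eq_empty_iff_subset.1 hc)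
    rw [cut_self, cutBound_of_dvd hdiv, Int.cast_zero]
  exact (hproper I hI hne hc).1

end balanced

theorem exists_isGoodWeighting {m : ℤ} (hm : 3 ≤ m) (s : Finset V) (d : V → ℤ)
    (hd : ∀ x ∈ s, 1 ≤ d x ∧ d x ≤ m - 1) (hdiv : m ∣ ∑ x ∈ s, d x) :
    ∃ w, IsGoodWeighting m d s w := by
  induction s using Finset.strongInduction generalizing d with
  | H s ih =>
  have merge : ∀ d : V → ℤ, (∀ x ∈ s, 1 ≤ d x ∧ d x ≤ m - 1) → m ∣ ∑ x ∈ s, d x →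
      ∀ i ∈ s, ∀ j ∈ s, i ≠ j → d i + d j < m → ∃ w, IsGoodWeighting m d s w := by
    intro d hd hdiv i hi j hj hij hlt
    have hdi := hd i hi
    have hdj := hd j hj
    obtain ⟨W, hW⟩ := ih (s.erase i) (erase_ssubset hi) (update d j (d i + d j))
      (fun x hx => by
        by_cases hxj : x = j
        · rw [hxj, update_self]; omega
        · rw [update_of_ne hxj]; exact hd x (mem_of_mem_erase hx))
      (by rwa [sum_erase_update_add d hi hj hij])
    exact ⟨_, hW.split hi hj hij (by omega) (by omega) (by omega)⟩
  by_cases hlt : ∃ i ∈ s, ∃ j ∈ s, i ≠ j ∧ d i + d j < m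
  · obtain ⟨i, hi, j, hj, hij, h⟩ := hlt
    exact merge d hd hdiv i hi j hj hij h
  by_cases hgt : ∃ i ∈ s, ∃ j ∈ s, i ≠ j ∧ m < d i + d j
  · obtain ⟨i, hi, j, hj, hij, h⟩ := hgt
    obtain ⟨w, hw⟩ := merge (fun x => m - d x) (fun x hx => by have := hd x hx; omega)
      (by simpa [sum_sub_distrib] using dvd_sub (dvd_mul_left m s.card) hdiv) i hi j hj hij
      (by omega)
    exact ⟨w, hw.of_sub⟩
  push Not at hlt hgt
  exact exists_isGoodWeighting_of_balanced hm hd hdiv fun x hx y hy hxy =>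
    le_antisymm (hgt x hx y hy hxy) (hlt x hx y hy hxy)

/-- For `m ≥ 3`, `1 ≤ d_i ≤ m - 1` and `m ∣ Σ d_i`, there is a rational weighting of the
complete graph on `[n]` satisfying: (P1) the flow through each vertex `i` is `d_i (m - d_i)`;
(P2) the flow across each proper partition `I ⊔ Iᶜ` is at least `⟨d(I)⟩_m ⟨d(Iᶜ)⟩_m`; and
(P3) the flow across each proper `m`-partition (both parts `m`-divisible) is at least `m`. -/
theorem exists_weighting_P1_P2_P3 {n : ℕ} (m : ℕ) (hm : 3 ≤ m) (d : Fin n → ℤ)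
    (hd : ∀ i, 1 ≤ d i ∧ d i ≤ (m : ℤ) - 1) (hdiv : (m : ℤ) ∣ ∑ i, d i) :
    ∃ w : Fin n → Fin n → ℚ,
      (∀ i j, w i j = w j i) ∧ (∀ i, w i i = 0) ∧
      (∀ i, ∑ j, w i j = ((d i * ((m : ℤ) - d i) : ℤ) : ℚ)) ∧
      (∀ I : Finset (Fin n), 2 ≤ I.card → 2 ≤ Iᶜ.card →
        ∑ i ∈ I, ∑ j ∈ Iᶜ, w i j ≥
          ((((∑ i ∈ I, d i) % (m : ℤ)) * ((∑ j ∈ Iᶜ, d j) % (m : ℤ)) : ℤ) : ℚ)) ∧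
      (∀ I : Finset (Fin n), 2 ≤ I.card → 2 ≤ Iᶜ.card →
        (m : ℤ) ∣ (∑ i ∈ I, d i) → (m : ℤ) ∣ (∑ j ∈ Iᶜ, d j) →
        ∑ i ∈ I, ∑ j ∈ Iᶜ, w i j ≥ (m : ℚ)) := by
  obtain ⟨w, hw⟩ := exists_isGoodWeighting (by exact_mod_cast hm) univ d (fun i _ => hd i) hdiv
  have hcut : ∀ I, cut univ w I = ∑ i ∈ I, ∑ j ∈ Iᶜ, w i j := fun I => by
    rw [cut, compl_eq_univ_sdiff]
  refine ⟨w, hw.symm, hw.self, fun i => hw.flow i (mem_univ i), fun I _ _ => ?_,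
    fun I hI hIc hdvd _ => ?_⟩
  · rw [emod_mul_emod_eq_cutBound (by rwa [sum_add_sum_compl]), ← hcut]
    exact hw.cutBound_le I (subset_univ I)
  · rw [← hcut]
    have hc : (univ \ I).Nonempty := by rw [← compl_eq_univ_sdiff]; exact card_pos.1 (by omega)
    exact_mod_cast hw.le_cut I (subset_univ I) (card_pos.1 (by omega)) hc hdvd
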